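/- Let u, v be in the same cluster and u, w in different clusters of a graph generated from SBM(n,p,q,k). Then E[|N(u)∩N(v)|] - E[|N(u)∩N(w)|] = n(p-q)² - 2p(p-q). -/

import Mathlib

/-!
For `x ≠ y`, the loop terms `z = x, y` of `∑ z, A x z * A y z` vanish and the remaining
edges are distinct, so by independence the expectation is `∑ z, m x z * m y z`, where
`m x z = E[A x z]` is the block probability `B x z ∈ {p, q}` minus `p` on the diagonal.
Expanding, `∑ z, m x z * m y z = ∑ z, B x z * B y z - 2 p B x y`. Since `B v = B u`, the
block parts differ by `∑ z, B u z (B u z - B w z)`, to which only the clusters of `u` and `w`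
contribute, with `n p (p - q)` and `n q (q - p)`; the correction terms give `-2p (p - q)`.
-/

open MeasureTheory ProbabilityTheory

lemma MeasureTheory.integrable_mul_of_zero_or_one {Ω : Type*} [MeasurableSpace Ω]
    {μ : Measure Ω} [IsFiniteMeasure μ] {X Y : Ω → ℝ} (hX : Measurable X) (hY : Measurable Y)
    (hX01 : ∀ ω, X ω = 0 ∨ X ω = 1) (hY01 : ∀ ω, Y ω = 0 ∨ Y ω = 1) :
    Integrable (fun ω => X ω * Y ω) μ :=
  Integrable.of_bound (hX.mul hY).aestronglyMeasurable 1 <| Filter.Eventually.of_forall fun ω => by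
    rcases hX01 ω with hx | hx <;> rcases hY01 ω with hy | hy <;> simp [hx, hy]

namespace StochasticBlockModel

variable {ι κ : Type*} [DecidableEq ι] (p q : ℝ)

def blockProb (x z : ι × κ) : ℝ := if x.1 = z.1 then p else q

def edgeProb [DecidableEq κ] (x z : ι × κ) : ℝ := if x = z then 0 else blockProb p q x z

variable {p q}

lemma blockProb_comm (x y : ι × κ) : blockProb p q x y = blockProb p q y x := by
  simp only [blockProb, eq_comm]

lemma blockProb_congr_left {x y : ι × κ} (h : x.1 = y.1) : blockProb p q x = blockProb p q y := by
  funext z; simp only [blockProb, h]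

lemma edgeProb_eq_blockProb_sub [DecidableEq κ] (x z : ι × κ) :
    edgeProb p q x z = blockProb p q x z - if x = z then p else 0 := by
  by_cases h : x = z
  · simp [edgeProb, blockProb, h]
  · simp [edgeProb, h]

lemma sum_edgeProb_mul_edgeProb [Fintype ι] [Fintype κ] [DecidableEq κ] {x y : ι × κ}
    (hxy : x ≠ y) :
    ∑ z, edgeProb p q x z * edgeProb p q y z =
      ∑ z, blockProb p q x z * blockProb p q y z - 2 * p * blockProb p q x y := by
  have expand : ∀ z, edgeProb p q x z * edgeProb p q y z =
      blockProb p q x z * blockProb p q y z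
        - (if x = z then p * blockProb p q y z else 0)
        - (if y = z then p * blockProb p q x z else 0) := by
    intro z
    simp only [edgeProb_eq_blockProb_sub]
    by_cases hx : x = z
    · subst hx; simp only [if_neg (Ne.symm hxy), ↓reduceIte]; ring
    · by_cases hy : y = z <;> simp only [hx, hy, if_true, if_false] <;> ring
  simp only [expand, Finset.sum_sub_distrib, Finset.sum_ite_eq, Finset.mem_univ, if_true,
    blockProb_comm y x]
  ring

lemma sum_blockProb_mul_sub_blockProb [Fintype ι] [Fintype κ] {x w : ι × κ} (h : x.1 ≠ w.1) :
    ∑ z, blockProb p q x z * (blockProb p q x z - blockProb p q w z) =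
      Fintype.card κ * (p - q) ^ 2 := by
  rw [Fintype.sum_prod_type]
  simp only [blockProb]
  rw [Fintype.sum_eq_add x.1 w.1 h (fun i hi => by simp [Ne.symm hi.1, Ne.symm hi.2])]
  simp only [if_neg h, if_neg (Ne.symm h), ↓reduceIte, Finset.sum_const, Finset.card_univ,
    nsmul_eq_mul]
  ring

theorem sum_edgeProb_mul_sub_sum_edgeProb_mul [Fintype ι] [Fintype κ] [DecidableEq κ]
    {u v w : ι × κ} (huv : u ≠ v) (hsame : u.1 = v.1) (hdiff : u.1 ≠ w.1) :
    ∑ z, edgeProb p q u z * edgeProb p q v z - ∑ z, edgeProb p q u z * edgeProb p q w z =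
      Fintype.card κ * (p - q) ^ 2 - 2 * p * (p - q) := by
  have huw : u ≠ w := fun h => hdiff (congrArg Prod.fst h)
  rw [sum_edgeProb_mul_edgeProb huv, sum_edgeProb_mul_edgeProb huw,
    ← blockProb_congr_left hsame, ← sum_blockProb_mul_sub_blockProb hdiff,
    show blockProb p q u v = p from if_pos hsame, show blockProb p q u w = q from if_neg hdiff]
  simp only [mul_sub, Finset.sum_sub_distrib]
  ring

section Adjacency

variable {Ω : Type*} [MeasureSpace Ω] {A : ι × κ → ι × κ → Ω → ℝ}

lemma integral_adj_eq_edgeProb [DecidableEq κ] (hdiag : ∀ u ω, A u u ω = 0)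
    (hmean_same : ∀ u v, u ≠ v → u.1 = v.1 → ∫ ω, A u v ω ∂ℙ = p)
    (hmean_diff : ∀ u v, u.1 ≠ v.1 → ∫ ω, A u v ω ∂ℙ = q) (x z : ι × κ) :
    ∫ ω, A x z ω ∂ℙ = edgeProb p q x z := by
  by_cases hxz : x = z
  · subst hxz; simp [edgeProb, hdiag]
  by_cases hblock : x.1 = z.1
  · simp [edgeProb, blockProb, hxz, hblock, hmean_same x z hxz hblock]
  · simp [edgeProb, blockProb, hxz, hblock, hmean_diff x z hblock]

lemma integral_adj_mul_adj (hdiag : ∀ u ω, A u u ω = 0)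
    (hindep : ∀ u v u' v' : ι × κ, s(u, v) ≠ s(u', v') →
      ∫ ω, A u v ω * A u' v' ω ∂ℙ = (∫ ω, A u v ω ∂ℙ) * ∫ ω, A u' v' ω ∂ℙ)
    {x y : ι × κ} (hxy : x ≠ y) (z : ι × κ) :
    ∫ ω, A x z ω * A y z ω ∂ℙ = (∫ ω, A x z ω ∂ℙ) * ∫ ω, A y z ω ∂ℙ := by
  by_cases hzx : z = x
  · subst hzx; simp [hdiag]
  by_cases hzy : z = y
  · subst hzy; simp [hdiag]
  refine hindep x z y z fun h => ?_
  rcases Sym2.eq_iff.mp h with ⟨h, -⟩ | ⟨-, h⟩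
  exacts [hxy h, hzy h]

theorem integral_sum_adj_mul_adj [Fintype ι] [Fintype κ] [DecidableEq κ]
    [IsFiniteMeasure (ℙ : Measure Ω)]
    (hdiag : ∀ u ω, A u u ω = 0) (hbool : ∀ u v ω, A u v ω = 0 ∨ A u v ω = 1)
    (hmeas : ∀ u v, Measurable (A u v))
    (hmean_same : ∀ u v, u ≠ v → u.1 = v.1 → ∫ ω, A u v ω ∂ℙ = p)
    (hmean_diff : ∀ u v, u.1 ≠ v.1 → ∫ ω, A u v ω ∂ℙ = q)
    (hindep : ∀ u v u' v' : ι × κ, s(u, v) ≠ s(u', v') →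
      ∫ ω, A u v ω * A u' v' ω ∂ℙ = (∫ ω, A u v ω ∂ℙ) * ∫ ω, A u' v' ω ∂ℙ)
    {x y : ι × κ} (hxy : x ≠ y) :
    ∫ ω, ∑ z, A x z ω * A y z ω ∂ℙ = ∑ z, edgeProb p q x z * edgeProb p q y z := by
  rw [integral_finsetSum _ fun z _ =>
    integrable_mul_of_zero_or_one (hmeas x z) (hmeas y z) (hbool x z) (hbool y z)]
  simp only [integral_adj_mul_adj hdiag hindep hxy,
    integral_adj_eq_edgeProb hdiag hmean_same hmean_diff]

end Adjacency

end StochasticBlockModel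

theorem sbm_expected_common_neighbors_gap_general
    {Ω : Type*} [MeasureSpace Ω] [IsProbabilityMeasure (ℙ : Measure Ω)]
    (n k : ℕ) (p q : ℝ)
    (A : (Fin k × Fin n) → (Fin k × Fin n) → Ω → ℝ)
    (hdiag : ∀ u ω, A u u ω = 0)
    (hbool : ∀ u v ω, A u v ω = 0 ∨ A u v ω = 1)
    (hmeas : ∀ u v, Measurable (A u v))
    (hmean_same : ∀ u v, u ≠ v → u.1 = v.1 → (∫ ω, A u v ω ∂ℙ) = p)
    (hmean_diff : ∀ u v, u.1 ≠ v.1 → (∫ ω, A u v ω ∂ℙ) = q)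
    (hindep : ∀ u v u' v' : Fin k × Fin n, s(u, v) ≠ s(u', v') →
      (∫ ω, A u v ω * A u' v' ω ∂ℙ) = (∫ ω, A u v ω ∂ℙ) * (∫ ω, A u' v' ω ∂ℙ))
    (u v w : Fin k × Fin n) (huv : u ≠ v) (hsame : u.1 = v.1) (hdiff : u.1 ≠ w.1) :
    (∫ ω, (∑ z, A u z ω * A v z ω) ∂ℙ) - (∫ ω, (∑ z, A u z ω * A w z ω) ∂ℙ)
      = (n : ℝ) * (p - q) ^ 2 - 2 * p * (p - q) := by
  have huw : u ≠ w := fun h => hdiff (congrArg Prod.fst h)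
  rw [StochasticBlockModel.integral_sum_adj_mul_adj hdiag hbool hmeas hmean_same hmean_diff
      hindep huv,
    StochasticBlockModel.integral_sum_adj_mul_adj hdiag hbool hmeas hmean_same hmean_diff
      hindep huw,
    StochasticBlockModel.sum_edgeProb_mul_sub_sum_edgeProb_mul huv hsame hdiff, Fintype.card_fin]

/-- In SBM(n,p,q,k) (vertex set `Fin k × Fin n`, within-cluster edge
probability `p`, cross-cluster probability `q`, `0 < q < p < 1`, edges
independent), if `u, v` are distinct vertices in the same cluster and `u, w`
are in different clusters, then
`E[|N(u)∩N(v)|] - E[|N(u)∩N(w)|] = n(p-q)² - 2p(p-q)`. (Since `A(x,x) = 0`,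
the sum `∑_z A(x,z)·A(y,z)` counts exactly the common neighbors of `x,y`.) -/
theorem sbm_expected_common_neighbors_gap
    {Ω : Type*} [MeasureSpace Ω] [IsProbabilityMeasure (ℙ : Measure Ω)]
    (n k : ℕ) (p q : ℝ) (hq : 0 < q) (hqp : q < p) (hp : p < 1)
    (A : (Fin k × Fin n) → (Fin k × Fin n) → Ω → ℝ)
    (hsymm : ∀ u v, A u v = A v u)
    (hdiag : ∀ u ω, A u u ω = 0)
    (hbool : ∀ u v ω, A u v ω = 0 ∨ A u v ω = 1)
    (hmeas : ∀ u v, Measurable (A u v))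
    (hmean_same : ∀ u v, u ≠ v → u.1 = v.1 → (∫ ω, A u v ω ∂ℙ) = p)
    (hmean_diff : ∀ u v, u.1 ≠ v.1 → (∫ ω, A u v ω ∂ℙ) = q)
    (hindep : ∀ u v u' v' : Fin k × Fin n, s(u, v) ≠ s(u', v') →
      (∫ ω, A u v ω * A u' v' ω ∂ℙ) = (∫ ω, A u v ω ∂ℙ) * (∫ ω, A u' v' ω ∂ℙ))
    (u v w : Fin k × Fin n) (huv : u ≠ v) (hsame : u.1 = v.1) (hdiff : u.1 ≠ w.1) :
    (∫ ω, (∑ z, A u z ω * A v z ω) ∂ℙ) - (∫ ω, (∑ z, A u z ω * A w z ω) ∂ℙ)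
      = (n : ℝ) * (p - q) ^ 2 - 2 * p * (p - q) :=
  sbm_expected_common_neighbors_gap_general n k p q A hdiag hbool hmeas hmean_same hmean_diff hindep
    u v w huv hsame hdiff
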